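/- Let Π₁ and Π₂ be Markov kernels on (E, B(E)), both reversible with respect to the probability measure μ, and suppose there exists ϱ ≥ 0 such that E_{Π₂}(f) ≥ ϱ · E_{Π₁}(f) for every f ∈ L²₀(E,μ). Then Gap(Π₂) ≥ ϱ · Gap(Π₁); and if ϱ > 0, then for every f ∈ L²₀(E,μ), V(f,Π₂) ≤ (ϱ^{−1} − 1) ‖f‖²_μ + ϱ^{−1} V(f,Π₁), where V(f,Π) := 2 sup_{g ∈ L²₀(E,μ)}[2⟨f,g⟩_μ − E_Π(g)] − ‖f‖²_μ is the variational representation of the asymptotic variance of f along the μ-reversible chain with kernel Π. -/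

import Mathlib

open MeasureTheory ProbabilityTheory
open scoped ENNReal

/-- The Dirichlet form `E_K(f) = ∫ f (f - Kf) dμ` of a Markov transition `K`. -/
noncomputable def dform {α : Type*} [MeasurableSpace α]
    (μ : Measure α) (K : α → Measure α) (f : α → ℝ) : ℝ :=
  ∫ x, f x * (f x - ∫ y, f y ∂(K x)) ∂μ

/-- The right spectral gap `Gap(K) = inf {E_K(f)/‖f‖²_μ : f ∈ L²₀(μ), ‖f‖_μ > 0}`
(valued in `[0, ∞]`, with the convention `inf ∅ = ∞`). -/
noncomputable def gapE {α : Type*} [MeasurableSpace α]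
    (μ : Measure α) (K : α → Measure α) : ℝ≥0∞ :=
  sInf {r : ℝ≥0∞ | ∃ f : α → ℝ, MemLp f 2 μ ∧ (∫ x, f x ∂μ) = 0 ∧ 0 < ∫ x, f x ^ 2 ∂μ ∧
    r = ENNReal.ofReal (dform μ K f / ∫ x, f x ^ 2 ∂μ)}

/-- The variational representation of the asymptotic variance,
`V(f, K) = 2 sup_{g ∈ L²₀(μ)} [2⟨f, g⟩_μ - E_K(g)] - ‖f‖²_μ`, valued in the extended reals. -/
noncomputable def vvar {α : Type*} [MeasurableSpace α]
    (μ : Measure α) (K : α → Measure α) (f : α → ℝ) : EReal :=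
  2 * sSup {r : EReal | ∃ g : α → ℝ, MemLp g 2 μ ∧ (∫ x, g x ∂μ) = 0 ∧
      r = ((2 * (∫ x, f x * g x ∂μ) - dform μ K g : ℝ) : EReal)}
    - ((∫ x, f x ^ 2 ∂μ : ℝ) : EReal)

/-!
Both inequalities follow from the comparison `ϱ E₁(g) ≤ E₂(g)` one test function at a time.
For the gap, the Rayleigh quotients of `Π₂` dominate `ϱ` times those of `Π₁`. For the variance,
`E(ϱ g) = ϱ² E(g)`, so testing the supremum for `Π₁` at `ϱ g` gives
`2⟨f, g⟩ - E₂(g) ≤ ϱ⁻¹ (2⟨f, ϱ g⟩ - E₁(ϱ g))`, i.e. `sup₂ ≤ ϱ⁻¹ sup₁`; the stated bound is this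
inequality rearranged, since `(ϱ⁻¹ - 1) ‖f‖² + ϱ⁻¹ (2 sup₁ - ‖f‖²) = 2 ϱ⁻¹ sup₁ - ‖f‖²`.
-/

section

variable {α : Type*} [MeasurableSpace α] (μ : Measure α)

lemma dform_const_mul (K : α → Measure α) (c : ℝ) (g : α → ℝ) :
    dform μ K (fun x => c * g x) = c ^ 2 * dform μ K g := by
  unfold dform
  rw [← integral_const_mul]
  congr 1 with x
  rw [integral_const_mul]
  ring

lemma ofReal_mul_gapE_le {K₁ K₂ : α → Measure α} {ϱ : ℝ} (hϱ : 0 ≤ ϱ)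
    (hcomp : ∀ f : α → ℝ, MemLp f 2 μ → (∫ x, f x ∂μ) = 0 → ϱ * dform μ K₁ f ≤ dform μ K₂ f) :
    ENNReal.ofReal ϱ * gapE μ K₁ ≤ gapE μ K₂ := by
  refine le_sInf ?_
  rintro _ ⟨f, hf, hf0, hfpos, rfl⟩
  have hgap₁ : gapE μ K₁ ≤ ENNReal.ofReal (dform μ K₁ f / ∫ x, f x ^ 2 ∂μ) :=
    sInf_le ⟨f, hf, hf0, hfpos, rfl⟩
  calc ENNReal.ofReal ϱ * gapE μ K₁
      ≤ ENNReal.ofReal ϱ * ENNReal.ofReal (dform μ K₁ f / ∫ x, f x ^ 2 ∂μ) :=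
        mul_le_mul_right hgap₁ _
    _ = ENNReal.ofReal (ϱ * dform μ K₁ f / ∫ x, f x ^ 2 ∂μ) := by
        rw [← ENNReal.ofReal_mul hϱ, mul_div_assoc]
    _ ≤ _ := ENNReal.ofReal_le_ofReal (div_le_div_of_nonneg_right (hcomp f hf hf0) hfpos.le)

noncomputable def vvarSup (K : α → Measure α) (f : α → ℝ) : EReal :=
  sSup {r : EReal | ∃ g : α → ℝ, MemLp g 2 μ ∧ (∫ x, g x ∂μ) = 0 ∧
      r = ((2 * (∫ x, f x * g x ∂μ) - dform μ K g : ℝ) : EReal)}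

lemma vvar_eq_two_mul_vvarSup_sub (K : α → Measure α) (f : α → ℝ) :
    vvar μ K f = 2 * vvarSup μ K f - ((∫ x, f x ^ 2 ∂μ : ℝ) : EReal) :=
  rfl

lemma vvarSup_le_inv_mul {K₁ K₂ : α → Measure α} {ϱ : ℝ} (hϱ : 0 < ϱ)
    (hcomp : ∀ g : α → ℝ, MemLp g 2 μ → (∫ x, g x ∂μ) = 0 → ϱ * dform μ K₁ g ≤ dform μ K₂ g)
    (f : α → ℝ) :
    vvarSup μ K₂ f ≤ ((ϱ⁻¹ : ℝ) : EReal) * vvarSup μ K₁ f := by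
  refine sSup_le ?_
  rintro _ ⟨g, hg, hg0, rfl⟩
  have hscaled : ((2 * (∫ x, f x * (ϱ * g x) ∂μ) - dform μ K₁ (fun x => ϱ * g x) : ℝ) : EReal)
      ≤ vvarSup μ K₁ f :=
    le_sSup ⟨fun x => ϱ * g x, hg.const_mul ϱ, by rw [integral_const_mul, hg0, mul_zero], rfl⟩
  have hreal : 2 * (∫ x, f x * g x ∂μ) - dform μ K₂ g ≤
      ϱ⁻¹ * (2 * (∫ x, f x * (ϱ * g x) ∂μ) - dform μ K₁ (fun x => ϱ * g x)) := by
    have hinner : (∫ x, f x * (ϱ * g x) ∂μ) = ϱ * ∫ x, f x * g x ∂μ := by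
      rw [← integral_const_mul]
      congr 1 with x
      ring
    rw [hinner, dform_const_mul]
    have hexpand : ϱ⁻¹ * (2 * (ϱ * ∫ x, f x * g x ∂μ) - ϱ ^ 2 * dform μ K₁ g) =
        2 * (∫ x, f x * g x ∂μ) - ϱ * dform μ K₁ g := by
      field_simp
    linarith [hcomp g hg hg0]
  calc _ ≤ ((ϱ⁻¹ : ℝ) : EReal) * _ := by exact_mod_cast hreal
    _ ≤ _ := mul_le_mul_of_nonneg_left hscaled (by exact_mod_cast (inv_pos.2 hϱ).le)

end

lemma EReal.two_mul_sub_le_of_le_mul {a b : EReal} {t n : ℝ} (ht : 0 < t) (hab : a ≤ t * b) :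
    2 * a - n ≤ (((t - 1) * n : ℝ) : EReal) + t * (2 * b - n) := by
  induction b using EReal.rec with
  | bot =>
    rw [EReal.mul_bot_of_pos (by exact_mod_cast ht), le_bot_iff] at hab
    simp [hab, EReal.mul_bot_of_pos two_pos]
  | top =>
    rw [EReal.mul_top_of_pos two_pos, EReal.top_sub_coe, EReal.coe_mul_top_of_pos ht,
      EReal.coe_add_top]
    exact le_top
  | coe b =>
    induction a using EReal.rec with
    | bot => simp [EReal.mul_bot_of_pos two_pos]
    | top => exact absurd hab (EReal.coe_lt_top (t * b)).not_ge
    | coe a =>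
      have hab : a ≤ t * b := by exact_mod_cast hab
      have hlin : ((2 * a - n : ℝ) : EReal) ≤ ((t - 1) * n + t * (2 * b - n) : ℝ) :=
        EReal.coe_le_coe_iff.2 (by linarith)
      push_cast at hlin
      exact hlin

theorem dirichlet_comparison_general {E : Type*} [MeasurableSpace E]
    (μ : Measure E)
    (P₁ P₂ : Kernel E E)
    (ϱ : ℝ) (hϱ : 0 ≤ ϱ)
    (hcomp : ∀ f : E → ℝ, MemLp f 2 μ → (∫ x, f x ∂μ) = 0 →
      ϱ * dform μ (fun x => P₁ x) f ≤ dform μ (fun x => P₂ x) f) :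
    ENNReal.ofReal ϱ * gapE μ (fun x => P₁ x) ≤ gapE μ (fun x => P₂ x) ∧
    (0 < ϱ → ∀ f : E → ℝ, MemLp f 2 μ → (∫ x, f x ∂μ) = 0 →
      vvar μ (fun x => P₂ x) f ≤
        (((ϱ⁻¹ - 1) * ∫ x, f x ^ 2 ∂μ : ℝ) : EReal) +
          ((ϱ⁻¹ : ℝ) : EReal) * vvar μ (fun x => P₁ x) f) := by
  refine ⟨ofReal_mul_gapE_le μ hϱ hcomp, fun hϱpos f _ _ => ?_⟩
  rw [vvar_eq_two_mul_vvarSup_sub, vvar_eq_two_mul_vvarSup_sub]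
  exact EReal.two_mul_sub_le_of_le_mul (inv_pos.2 hϱpos) (vvarSup_le_inv_mul μ hϱpos hcomp f)

/-- If two `μ`-reversible Markov kernels satisfy `E_{Π₂}(f) ≥ ϱ E_{Π₁}(f)` on `L²₀(μ)`, then
`Gap(Π₂) ≥ ϱ Gap(Π₁)`, and if `ϱ > 0` also
`V(f, Π₂) ≤ (ϱ⁻¹ - 1) ‖f‖²_μ + ϱ⁻¹ V(f, Π₁)` for every `f ∈ L²₀(μ)`. -/
theorem dirichlet_comparison {E : Type*} [MeasurableSpace E]
    (μ : Measure E) [IsProbabilityMeasure μ]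
    (P₁ P₂ : Kernel E E) [IsMarkovKernel P₁] [IsMarkovKernel P₂]
    (hrev₁ : ∀ A B : Set E, MeasurableSet A → MeasurableSet B →
      ∫⁻ x in A, P₁ x B ∂μ = ∫⁻ x in B, P₁ x A ∂μ)
    (hrev₂ : ∀ A B : Set E, MeasurableSet A → MeasurableSet B →
      ∫⁻ x in A, P₂ x B ∂μ = ∫⁻ x in B, P₂ x A ∂μ)
    (ϱ : ℝ) (hϱ : 0 ≤ ϱ)
    (hcomp : ∀ f : E → ℝ, MemLp f 2 μ → (∫ x, f x ∂μ) = 0 →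
      ϱ * dform μ (fun x => P₁ x) f ≤ dform μ (fun x => P₂ x) f) :
    ENNReal.ofReal ϱ * gapE μ (fun x => P₁ x) ≤ gapE μ (fun x => P₂ x) ∧
    (0 < ϱ → ∀ f : E → ℝ, MemLp f 2 μ → (∫ x, f x ∂μ) = 0 →
      vvar μ (fun x => P₂ x) f ≤
        (((ϱ⁻¹ - 1) * ∫ x, f x ^ 2 ∂μ : ℝ) : EReal) +
          ((ϱ⁻¹ : ℝ) : EReal) * vvar μ (fun x => P₁ x) f) :=
  dirichlet_comparison_general μ P₁ P₂ ϱ hϱ hcomp
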